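/- arXiv:1509.06785 — 5 statements merged into one kernel-verified Lean document; each statement's English description precedes it below -/
import Mathlib

section
/- Let U ⊆ ℝ^m be a connected open set and let A : U → M_m(ℝ) be a smooth matrix-valued function such that A(x) is antisymmetric for every x ∈ U and such that ∂_k A_{ij} = ∂_j A_{ik} on U for all indices i, j, k ∈ {1,…,m}. Then A is constant on U. -/
open Matrix

/-- Partial derivative of `f` in the `i`-th coordinate direction at `x`. -/
noncomputable def pd {m : ℕ} (i : Fin m) (f : (Fin m → ℝ) → ℝ) (x : Fin m → ℝ) : ℝ :=
  fderiv ℝ f x (Pi.single i 1)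

/-- A smooth antisymmetric matrix-valued map on a connected open set satisfying
`∂ₖ A_{ij} = ∂ⱼ A_{ik}` is constant. -/
theorem antisymmetric_closed_is_constant {m : ℕ}
    (U : Set (Fin m → ℝ)) (hU : IsOpen U) (hconn : IsConnected U)
    (A : (Fin m → ℝ) → Matrix (Fin m) (Fin m) ℝ)
    (hsmooth : ∀ i j : Fin m, ContDiffOn ℝ (⊤ : ℕ∞) (fun x => A x i j) U)
    (hanti : ∀ x ∈ U, (A x)ᵀ = -(A x))
    (hclosed : ∀ x ∈ U, ∀ i j k : Fin m,
      pd k (fun y => A y i j) x = pd j (fun y => A y i k) x) :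
    ∀ x ∈ U, ∀ y ∈ U, A x = A y := by
  -- differentiability at points of U
  have hdiff : ∀ i j : Fin m, ∀ x ∈ U, DifferentiableAt ℝ (fun y => A y i j) x := by
    intro i j x hx
    exact ((hsmooth i j).contDiffAt (hU.mem_nhds hx)).differentiableAt (by simp)
  -- antisymmetry of partial derivatives
  have hantiD : ∀ x ∈ U, ∀ i j k : Fin m,
      pd k (fun y => A y i j) x = - pd k (fun y => A y j i) x := by
    intro x hx i j k
    have hev : (fun y => A y i j) =ᶠ[nhds x] (fun y => -(A y j i)) := by
      filter_upwards [hU.mem_nhds hx] with y hy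
      have h := congrFun (congrFun (hanti y hy) j) i
      simpa [Matrix.transpose_apply, Matrix.neg_apply] using h
    have h1 : fderiv ℝ (fun y => A y i j) x = fderiv ℝ (fun y => -(A y j i)) x :=
      hev.fderiv_eq
    have h2 : fderiv ℝ (fun y => -(A y j i)) x = -(fderiv ℝ (fun y => A y j i) x) :=
      fderiv_neg
    simp only [pd, h1, h2, ContinuousLinearMap.neg_apply]
  -- all partial derivatives vanish on U
  have hzero : ∀ x ∈ U, ∀ i j k : Fin m, pd k (fun y => A y i j) x = 0 := by
    intro x hx i j k
    have h1 := hclosed x hx i j k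
    have h2 := hantiD x hx i k j
    have h3 := hclosed x hx k i j
    have h4 := hantiD x hx k j i
    have h5 := hclosed x hx j k i
    have h6 := hantiD x hx j i k
    linarith
  -- hence the full Fréchet derivative vanishes on U
  have hfz : ∀ i j : Fin m, ∀ x ∈ U, fderiv ℝ (fun y => A y i j) x = 0 := by
    intro i j x hx
    ext v
    have hv : v = ∑ k : Fin m, v k • (Pi.single k 1 : Fin m → ℝ) := by
      ext l
      simp [Pi.single_apply]
    rw [ContinuousLinearMap.zero_apply, hv, map_sum]
    refine Finset.sum_eq_zero fun k _ => ?_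
    rw [_root_.map_smul]
    have := hzero x hx i j k
    simp only [pd] at this
    simp [this]
  -- local constancy
  have hloc : ∀ z ∈ U, ∃ ε > 0, Metric.ball z ε ⊆ U ∧
      ∀ w ∈ Metric.ball z ε, A w = A z := by
    intro z hz
    obtain ⟨ε, hε, hball⟩ := Metric.isOpen_iff.1 hU z hz
    refine ⟨ε, hε, hball, fun w hw => ?_⟩
    ext i j
    have hdiffOn : DifferentiableOn ℝ (fun y => A y i j) (Metric.ball z ε) :=
      fun y hy => (hdiff i j y (hball hy)).differentiableWithinAt
    have hfz' : ∀ y ∈ Metric.ball z ε,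
        fderivWithin ℝ (fun y => A y i j) (Metric.ball z ε) y = 0 := by
      intro y hy
      rw [fderivWithin_of_isOpen Metric.isOpen_ball hy]
      exact hfz i j y (hball hy)
    exact (convex_ball z ε).is_const_of_fderivWithin_eq_zero hdiffOn hfz' hw
      (Metric.mem_ball_self hε)
  -- global constancy via connectedness
  intro x hx y hy
  by_contra hne
  set S : Set (Fin m → ℝ) := {z | z ∈ U ∧ A z = A x} with hS
  set T : Set (Fin m → ℝ) := {z | z ∈ U ∧ A z ≠ A x} with hT
  have hSopen : IsOpen S := by
    rw [Metric.isOpen_iff]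
    rintro z ⟨hzU, hzA⟩
    obtain ⟨ε, hε, hb, hc⟩ := hloc z hzU
    exact ⟨ε, hε, fun w hw => ⟨hb hw, (hc w hw).trans hzA⟩⟩
  have hTopen : IsOpen T := by
    rw [Metric.isOpen_iff]
    rintro z ⟨hzU, hzA⟩
    obtain ⟨ε, hε, hb, hc⟩ := hloc z hzU
    exact ⟨ε, hε, fun w hw => ⟨hb hw, fun h => hzA ((hc w hw).symm.trans h)⟩⟩
  have hsub : U ⊆ S ∪ T := by
    intro z hz
    by_cases h : A z = A x
    · exact Or.inl ⟨hz, h⟩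
    · exact Or.inr ⟨hz, h⟩
  have hSne : (U ∩ S).Nonempty := ⟨x, hx, hx, rfl⟩
  have hTne : (U ∩ T).Nonempty := ⟨y, hy, hy, fun h => hne h.symm⟩
  obtain ⟨z, _, ⟨_, hz1⟩, ⟨_, hz2⟩⟩ :=
    hconn.isPreconnected S T hSopen hTopen hsub hSne hTne
  exact hz2 hz1
end

section
/- Let (V, ω) be a symplectic vector space and let J : V → V be a linear map with J ∘ J = -id which is ω-tamed. Then: (a) there is a unique linear map J^{*ω} : V → V with ω(J^{*ω}x, y) = ω(x, Jy) for all x, y (the symplectic adjoint); (b) J^{*ω} ∘ J^{*ω} = -id and (J^{*ω})^{*ω} = J; (c) the bilinear form g(x, y) := -½ ω((J - J^{*ω})x, y) is symmetric and positive definite, with g(x, x) = ω(x, Jx); (d) the bilinear form b(x, y) := -½ ω((J + J^{*ω})x, y) is alternating; (e) both J and J^{*ω} are orthogonal with respect to g, i.e. g(Jx, Jy) = g(x, y) = g(J^{*ω}x, J^{*ω}y) for all x, y. -/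
/-- On a symplectic vector space, an `ω`-tamed complex structure `J` admits a unique
symplectic adjoint `J^{*ω}`; the adjoint squares to `-id`, is adjoint to `J`,
`g = -½ ω((J - J^{*ω})·, ·)` is a positive definite symmetric form with
`g(x,x) = ω(x, Jx)`, `b = -½ ω((J + J^{*ω})·, ·)` is alternating, and both `J` and
`J^{*ω}` are `g`-orthogonal. -/
theorem tamed_complex_structure_symplectic_adjoint
    {V : Type*} [AddCommGroup V] [Module ℝ V] [FiniteDimensional ℝ V]
    (ω : V →ₗ[ℝ] V →ₗ[ℝ] ℝ)
    (halt : ∀ x, ω x x = 0)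
    (hnd : ∀ x, (∀ y, ω x y = 0) → x = 0)
    (J : V →ₗ[ℝ] V) (hJ : J ∘ₗ J = -LinearMap.id)
    (htame : ∀ x, x ≠ 0 → 0 < ω x (J x)) :
    (∃! Jadj : V →ₗ[ℝ] V, ∀ x y, ω (Jadj x) y = ω x (J y)) ∧
    (∀ Jadj : V →ₗ[ℝ] V, (∀ x y, ω (Jadj x) y = ω x (J y)) →
      -- (b) `J^{*ω} ∘ J^{*ω} = -id` and `(J^{*ω})^{*ω} = J`
      Jadj ∘ₗ Jadj = -LinearMap.id ∧
      (∀ x y, ω (J x) y = ω x (Jadj y)) ∧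
      -- (c) `g` is symmetric and positive definite, with `g(x,x) = ω(x, Jx)`
      (∀ x y, -(1/2 : ℝ) * ω ((J - Jadj) x) y = -(1/2 : ℝ) * ω ((J - Jadj) y) x) ∧
      (∀ x, x ≠ 0 → 0 < -(1/2 : ℝ) * ω ((J - Jadj) x) x) ∧
      (∀ x, -(1/2 : ℝ) * ω ((J - Jadj) x) x = ω x (J x)) ∧
      -- (d) `b` is alternating
      (∀ x, -(1/2 : ℝ) * ω ((J + Jadj) x) x = 0) ∧
      -- (e) `J` and `J^{*ω}` are `g`-orthogonal
      (∀ x y, -(1/2 : ℝ) * ω ((J - Jadj) (J x)) (J y) = -(1/2 : ℝ) * ω ((J - Jadj) x) y) ∧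
      (∀ x y, -(1/2 : ℝ) * ω ((J - Jadj) (Jadj x)) (Jadj y)
        = -(1/2 : ℝ) * ω ((J - Jadj) x) y)) := by
  -- skew-symmetry from the alternating property
  have hskew : ∀ x y, ω x y = -ω y x := by
    intro x y
    have h := halt (x + y)
    simp only [map_add, LinearMap.add_apply, halt x, halt y] at h
    linarith
  -- J² = -id pointwise
  have hJ2 : ∀ x, J (J x) = -x := by
    intro x
    have := congrFun (congrArg DFunLike.coe hJ) x
    simpa using this
  -- extensionality via nondegeneracy
  have hext : ∀ u v : V, (∀ y, ω u y = ω v y) → u = v := by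
    intro u v h
    have h0 : u - v = 0 :=
      hnd _ (by intro y; simp [map_sub, LinearMap.sub_apply, h y])
    exact sub_eq_zero.mp h0
  -- existence of the symplectic adjoint
  have hωinj : Function.Injective ω := by
    intro u v h
    exact hext u v (fun y => by rw [h])
  let e : V ≃ₗ[ℝ] Module.Dual ℝ V :=
    LinearMap.linearEquivOfInjective ω hωinj (Subspace.dual_finrank_eq).symm
  have he : ∀ x, e x = ω x := fun x => LinearMap.linearEquivOfInjective_apply hωinj _ x
  refine ⟨⟨e.symm.toLinearMap ∘ₗ J.dualMap ∘ₗ (e : V →ₗ[ℝ] Module.Dual ℝ V), ?_, ?_⟩, ?_⟩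
  · intro x y
    have : ω (e.symm (J.dualMap (e x))) = e (e.symm (J.dualMap (e x))) := (he _).symm
    simp only [LinearMap.comp_apply, LinearEquiv.coe_coe, this, LinearEquiv.apply_symm_apply]
    rw [LinearMap.dualMap_apply, he x]
  · intro A hA
    ext x
    apply hext
    intro y
    have : ω (e.symm (J.dualMap (e x))) = e (e.symm (J.dualMap (e x))) := (he _).symm
    simp only [LinearMap.comp_apply, LinearEquiv.coe_coe, this, LinearEquiv.apply_symm_apply]
    rw [hA x y, LinearMap.dualMap_apply, he x]
  · intro A hA
    -- key identity: ω (J x) y = ω x (A y)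
    have hA' : ∀ x y, ω (J x) y = ω x (A y) := by
      intro x y
      rw [hskew (J x) y, ← hA y x, hskew (A y) x]
      ring
    have hAA : ∀ x, A (A x) = -x := by
      intro x
      apply hext
      intro y
      rw [hA (A x) y, hA x (J y), hJ2 y]
      simp
    constructor
    · ext x
      simpa using hAA x
    refine ⟨hA', ?_, ?_, ?_, ?_, ?_, ?_⟩
    · intro x y
      simp only [LinearMap.sub_apply, map_sub, LinearMap.sub_apply]
      have h1 : ω (A x) y = ω x (J y) := hA x y
      have h2 : ω (A y) x = ω y (J x) := hA y x
      have h3 : ω x (J y) = -ω (J y) x := hskew x (J y)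
      have h4 : ω y (J x) = -ω (J x) y := hskew y (J x)
      nlinarith [h1, h2, h3, h4]
    · intro x hx
      have h1 : ω (A x) x = ω x (J x) := hA x x
      have h2 : ω (J x) x = -ω x (J x) := hskew (J x) x
      have := htame x hx
      simp only [LinearMap.sub_apply, map_sub, LinearMap.sub_apply]
      nlinarith
    · intro x
      have h1 : ω (A x) x = ω x (J x) := hA x x
      have h2 : ω (J x) x = -ω x (J x) := hskew (J x) x
      simp only [LinearMap.sub_apply, map_sub, LinearMap.sub_apply]
      linarith
    · intro x
      have h1 : ω (A x) x = ω x (J x) := hA x x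
      have h2 : ω (J x) x = -ω x (J x) := hskew (J x) x
      simp only [LinearMap.add_apply, map_add, LinearMap.add_apply]
      linarith
    · intro x y
      simp only [LinearMap.sub_apply, map_sub, LinearMap.sub_apply]
      have h1 : ω (J (J x)) (J y) = -ω x (J y) := by rw [hJ2 x]; simp [hskew x (J y)]
      have h2 : ω (A (J x)) (J y) = ω (J x) (J (J y)) := hA (J x) (J y)
      have h3 : ω (J x) (J (J y)) = -ω (J x) y := by rw [hJ2 y]; simp
      have h4 : ω x (J y) = -ω (J y) x := hskew x (J y)
      have h5 : ω (A x) y = ω x (J y) := hA x y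
      nlinarith [h1, h2, h3, h4, h5]
    · intro x y
      simp only [LinearMap.sub_apply, map_sub, LinearMap.sub_apply]
      have h1 : ω (J (A x)) (A y) = ω (A x) (A (A y)) := hA' (A x) (A y)
      have h2 : ω (A x) (A (A y)) = -ω (A x) y := by rw [hAA y]; simp
      have h3 : ω (A (A x)) (A y) = -ω x (A y) := by rw [hAA x]; simp
      have h4 : ω x (A y) = ω (J x) y := (hA' x y).symm
      have h5 : ω (A x) y = ω x (J y) := hA x y
      nlinarith [h1, h2, h3, h4, h5]
end

section
/- Let (V, g) be a nonzero real inner product space and let J₊, J₋ : V → V be orthogonal complex structures, i.e. J₊² = J₋² = -id and g(J₊x, J₊y) = g(x, y), g(J₋x, J₋y) = g(x, y) for all x, y. Suppose J₊J₋ + J₋J₊ = -2p·id for some real number p. Then -1 ≤ p ≤ 1; moreover p = 1 if and only if J₊ = J₋, and p = -1 if and only if J₊ = -J₋. If in addition V has finite dimension d, then p = -tr(J₊J₋)/d. -/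
open scoped RealInnerProductSpace

/-- For orthogonal complex structures `J₊`, `J₋` on a nonzero inner product space with
`J₊J₋ + J₋J₊ = -2p id`, one has `-1 ≤ p ≤ 1`, `p = 1 ↔ J₊ = J₋`, `p = -1 ↔ J₊ = -J₋`,
and in finite dimension `d`, `p = -tr(J₊J₋)/d`. -/
theorem angle_function_range
    {V : Type*} [NormedAddCommGroup V] [InnerProductSpace ℝ V] [Nontrivial V]
    (Jp Jm : V →ₗ[ℝ] V) (p : ℝ)
    (hJp2 : Jp ∘ₗ Jp = -LinearMap.id)
    (hJm2 : Jm ∘ₗ Jm = -LinearMap.id)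
    (hJpo : ∀ x y : V, ⟪Jp x, Jp y⟫ = ⟪x, y⟫)
    (hJmo : ∀ x y : V, ⟪Jm x, Jm y⟫ = ⟪x, y⟫)
    (hanti : Jp ∘ₗ Jm + Jm ∘ₗ Jp = (-(2 * p)) • LinearMap.id) :
    (-1 ≤ p ∧ p ≤ 1) ∧
    (p = 1 ↔ Jp = Jm) ∧
    (p = -1 ↔ Jp = -Jm) ∧
    (FiniteDimensional ℝ V →
      p = -(LinearMap.trace ℝ V (Jp ∘ₗ Jm)) / (Module.finrank ℝ V : ℝ)) := by
  -- pointwise versions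
  have hJp2' : ∀ x : V, Jp (Jp x) = -x := fun x => by
    have := LinearMap.congr_fun hJp2 x; simpa using this
  have hJm2' : ∀ x : V, Jm (Jm x) = -x := fun x => by
    have := LinearMap.congr_fun hJm2 x; simpa using this
  have hanti' : ∀ x : V, Jp (Jm x) + Jm (Jp x) = (-(2 * p)) • x := fun x => by
    have := LinearMap.congr_fun hanti x; simpa using this
  -- key inner product identity
  have key : ∀ x : V, ⟪Jp x, Jm x⟫ = p * ‖x‖ ^ 2 := by
    intro x
    have h1 : ⟪Jp x, Jm x⟫ = -⟪x, Jp (Jm x)⟫ := by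
      have := hJpo x (-(Jp (Jm x)))
      rw [map_neg, hJp2' (Jm x), neg_neg] at this
      rw [this, inner_neg_right]
    have h2 : ⟪Jm x, Jp x⟫ = -⟪x, Jm (Jp x)⟫ := by
      have := hJmo x (-(Jm (Jp x)))
      rw [map_neg, hJm2' (Jp x), neg_neg] at this
      rw [this, inner_neg_right]
    have hsym : ⟪Jm x, Jp x⟫ = ⟪Jp x, Jm x⟫ := real_inner_comm _ _
    have hsum : ⟪Jp x, Jm x⟫ + ⟪Jm x, Jp x⟫ = -⟪x, (-(2 * p)) • x⟫ := by
      rw [h1, h2, ← neg_add, ← inner_add_right, hanti' x]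
    rw [hsym] at hsum
    rw [inner_smul_right, real_inner_self_eq_norm_sq] at hsum
    nlinarith [hsum]
  have hnp : ∀ x : V, ‖Jp x‖ = ‖x‖ := fun x => by
    have := hJpo x x
    rw [real_inner_self_eq_norm_sq, real_inner_self_eq_norm_sq] at this
    nlinarith [norm_nonneg (Jp x), norm_nonneg x]
  have hnm : ∀ x : V, ‖Jm x‖ = ‖x‖ := fun x => by
    have := hJmo x x
    rw [real_inner_self_eq_norm_sq, real_inner_self_eq_norm_sq] at this
    nlinarith [norm_nonneg (Jm x), norm_nonneg x]
  obtain ⟨x₀, hx₀⟩ := exists_ne (0 : V)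
  have hx₀n : (0:ℝ) < ‖x₀‖ := norm_pos_iff.mpr hx₀
  have hcs : |⟪Jp x₀, Jm x₀⟫| ≤ ‖x₀‖ ^ 2 := by
    calc |⟪Jp x₀, Jm x₀⟫| ≤ ‖Jp x₀‖ * ‖Jm x₀‖ := abs_real_inner_le_norm _ _
    _ = ‖x₀‖ ^ 2 := by rw [hnp, hnm]; ring
  have hrange : -1 ≤ p ∧ p ≤ 1 := by
    rw [key x₀, abs_mul, abs_of_pos (by positivity : (0:ℝ) < ‖x₀‖ ^ 2)] at hcs
    have habs : |p| ≤ 1 := by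
      have hs : (0:ℝ) < ‖x₀‖ ^ 2 := by positivity
      have : |p| * ‖x₀‖ ^ 2 ≤ 1 * ‖x₀‖ ^ 2 := by linarith
      exact le_of_mul_le_mul_right this hs
    exact ⟨neg_le_of_abs_le habs, le_of_abs_le habs⟩
  refine ⟨hrange, ?_, ?_, ?_⟩
  · constructor
    · intro hp
      ext x
      have h : ‖Jp x - Jm x‖ ^ 2 = 0 := by
        rw [norm_sub_sq_real, key x, hnp, hnm, hp]; ring
      have := pow_eq_zero_iff (n := 2) (by norm_num) |>.mp h
      have := norm_eq_zero.mp this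
      simpa [sub_eq_zero] using this
    · intro h
      have := key x₀
      rw [h, hJmo x₀ x₀, real_inner_self_eq_norm_sq] at this
      have h1 : (1:ℝ) * ‖x₀‖ ^ 2 = p * ‖x₀‖ ^ 2 := by linarith
      exact (mul_right_cancel₀ (by positivity) h1).symm
  · constructor
    · intro hp
      ext x
      have h : ‖Jp x + Jm x‖ ^ 2 = 0 := by
        rw [norm_add_sq_real, key x, hnp, hnm, hp]; ring
      have := pow_eq_zero_iff (n := 2) (by norm_num) |>.mp h
      have h0 := norm_eq_zero.mp this
      have : Jp x = -(Jm x) := eq_neg_of_add_eq_zero_left h0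
      simpa using this
    · intro h
      have := key x₀
      rw [h] at this
      simp only [LinearMap.neg_apply] at this
      rw [inner_neg_left, hJmo x₀ x₀, real_inner_self_eq_norm_sq] at this
      have h1 : (-1:ℝ) * ‖x₀‖ ^ 2 = p * ‖x₀‖ ^ 2 := by linarith
      exact (mul_right_cancel₀ (by positivity) h1).symm
  · intro hfd
    have htr := congrArg (LinearMap.trace ℝ V) hanti
    rw [map_add, map_smul, LinearMap.trace_id] at htr
    have hcomm : LinearMap.trace ℝ V (Jm ∘ₗ Jp) = LinearMap.trace ℝ V (Jp ∘ₗ Jm) := by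
      simpa [Module.End.mul_eq_comp] using LinearMap.trace_mul_comm ℝ Jm Jp
    rw [hcomm] at htr
    have hd : (0:ℝ) < (Module.finrank ℝ V : ℝ) := by
      exact_mod_cast Module.finrank_pos
    field_simp
    simp only [smul_eq_mul] at htr
    nlinarith [htr]
end

section
/- Let S be a positive definite symmetric 2×2 real matrix, c ∈ ℝ, C = [[0, c], [-c, 0]], and Ψ = S + C (which is invertible since det Ψ = det S + c² > 0). Define the 4×4 block matrices 𝐉 = [[0, -Ψ⁻¹], [Ψ, 0]] and 𝐉' = [[0, (Ψᵀ)⁻¹], [-Ψᵀ, 0]]. Then the number p := -¼ tr(𝐉 𝐉') equals (c² - det S)/(det S + c²); consequently (1 - p)/2 = det S/det Ψ and (1 + p)/2 = c²/det Ψ. -/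
open Matrix

/-- For a positive definite symmetric 2×2 matrix `S`, `C = [[0,c],[-c,0]]`, `Ψ = S + C`,
and the block matrices `𝐉 = [[0, -Ψ⁻¹],[Ψ, 0]]`, `𝐉' = [[0, (Ψᵀ)⁻¹],[-Ψᵀ, 0]]`, the
angle function `p = -¼ tr(𝐉𝐉')` equals `(c² - det S)/(det S + c²)`; consequently
`(1-p)/2 = det S/det Ψ` and `(1+p)/2 = c²/det Ψ`. -/
theorem angle_function_formula_dim4
    (S : Matrix (Fin 2) (Fin 2) ℝ) (hS : Sᵀ = S) (hSpos : S.PosDef) (c : ℝ)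
    (C : Matrix (Fin 2) (Fin 2) ℝ) (hC : C = !![0, c; -c, 0])
    (Ψ : Matrix (Fin 2) (Fin 2) ℝ) (hΨ : Ψ = S + C)
    (J J' : Matrix (Fin 2 ⊕ Fin 2) (Fin 2 ⊕ Fin 2) ℝ)
    (hJ : J = Matrix.fromBlocks 0 (-Ψ⁻¹) Ψ 0)
    (hJ' : J' = Matrix.fromBlocks 0 (Ψᵀ)⁻¹ (-Ψᵀ) 0)
    (p : ℝ) (hp : p = -(1 / 4) * Matrix.trace (J * J')) :
    Ψ.det = S.det + c ^ 2 ∧ 0 < Ψ.det ∧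
    p = (c ^ 2 - S.det) / (S.det + c ^ 2) ∧
    (1 - p) / 2 = S.det / Ψ.det ∧
    (1 + p) / 2 = c ^ 2 / Ψ.det := by
  have hb : S 1 0 = S 0 1 := by
    have := congrFun (congrFun hS 1) 0
    simpa using this.symm
  have hdetS : 0 < S.det := hSpos.det_pos
  have hdet : Ψ.det = S.det + c ^ 2 := by
    subst hΨ hC
    simp [Matrix.det_fin_two, hb]
    ring
  have hdpos : 0 < Ψ.det := by rw [hdet]; positivity
  have hne : Ψ.det ≠ 0 := ne_of_gt hdpos
  have htr : Matrix.trace (J * J') =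
      Matrix.trace (Ψ⁻¹ * Ψᵀ) + Matrix.trace (Ψ * (Ψᵀ)⁻¹) := by
    rw [hJ, hJ', Matrix.fromBlocks_multiply]
    simp [Matrix.trace, Fintype.sum_sum_type, Matrix.diag]
  have hdetT : (Ψᵀ).det ≠ 0 := by simpa using hne
  have h1 : Matrix.trace (Ψ⁻¹ * Ψᵀ) =
      (Ψ 0 0 * Ψ 1 1 + Ψ 1 1 * Ψ 0 0 - Ψ 0 1 * Ψ 0 1 - Ψ 1 0 * Ψ 1 0) / Ψ.det := by
    rw [Matrix.inv_def]
    simp [Matrix.adjugate_fin_two, Matrix.trace_fin_two, Matrix.mul_apply,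
      Fin.sum_univ_two, Ring.inverse_eq_inv', Matrix.det_fin_two,
      Matrix.vecMul, dotProduct, Matrix.transpose_apply]
    have hne2 : Ψ 0 0 * Ψ 1 1 - Ψ 0 1 * Ψ 1 0 ≠ 0 := by
      rw [← Matrix.det_fin_two]; exact hne
    field_simp
    ring
  have h2 : Matrix.trace (Ψ * (Ψᵀ)⁻¹) =
      (Ψ 0 0 * Ψ 1 1 + Ψ 1 1 * Ψ 0 0 - Ψ 0 1 * Ψ 0 1 - Ψ 1 0 * Ψ 1 0) / Ψ.det := by
    rw [Matrix.inv_def]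
    simp [Matrix.adjugate_fin_two, Matrix.trace_fin_two, Matrix.mul_apply,
      Fin.sum_univ_two, Ring.inverse_eq_inv', Matrix.det_fin_two,
      Matrix.vecMul, dotProduct, Matrix.transpose_apply]
    have hne2 : Ψ 0 0 * Ψ 1 1 - Ψ 0 1 * Ψ 1 0 ≠ 0 := by
      rw [← Matrix.det_fin_two]; exact hne
    field_simp
    ring
  have hpv : p = (c ^ 2 - S.det) / (S.det + c ^ 2) := by
    rw [hp, htr, h1, h2]
    have e00 : Ψ 0 0 = S 0 0 := by simp [hΨ, hC]
    have e11 : Ψ 1 1 = S 1 1 := by simp [hΨ, hC]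
    have e01 : Ψ 0 1 = S 0 1 + c := by simp [hΨ, hC]
    have e10 : Ψ 1 0 = S 0 1 - c := by simp [hΨ, hC, hb]; ring
    have hdS : S.det = S 0 0 * S 1 1 - S 0 1 * S 0 1 := by
      rw [Matrix.det_fin_two, hb]
    rw [e00, e11, e01, e10, hdet, hdS]
    have hne' : S 0 0 * S 1 1 - S 0 1 * S 0 1 + c ^ 2 ≠ 0 := by
      rw [← hdS]; rw [hdS] at hdetS ⊢; positivity
    field_simp
    ring
  refine ⟨hdet, hdpos, hpv, ?_, ?_⟩ <;>
    rw [hpv, hdet] <;> field_simp <;> ring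
end

section
/- Let (V, g) be a real inner product space and let J₊, J₋ : V → V be orthogonal complex structures (J₊² = J₋² = -id, g(J₊x, J₊y) = g(x, y), g(J₋x, J₋y) = g(x, y)) satisfying J₊J₋ + J₋J₊ = -2p·id for some real number p with p ≠ 1. Define the bilinear form ω(x, y) := g(J₊x, y) - (1/(2(1 - p))) · g([J₊, J₋]J₊ x, y). Then ω is antisymmetric and satisfies ω((J₊ - J₋)x, y) = -2 g(x, y) for all x, y ∈ V; in particular, if V is finite-dimensional then ω is nondegenerate. -/
open scoped RealInnerProductSpace

/-- For orthogonal complex structures `J₊`, `J₋` with angle function `p ≠ 1`, the form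
`ω(x,y) = g(J₊x, y) - (1/(2(1-p))) g([J₊,J₋]J₊x, y)` is antisymmetric and satisfies
`ω((J₊-J₋)x, y) = -2 g(x,y)`; in particular it is nondegenerate in finite dimension. -/
theorem symplectic_form_from_bihermitian
    {V : Type*} [NormedAddCommGroup V] [InnerProductSpace ℝ V]
    (Jp Jm : V →ₗ[ℝ] V) (p : ℝ)
    (hJp2 : Jp ∘ₗ Jp = -LinearMap.id)
    (hJm2 : Jm ∘ₗ Jm = -LinearMap.id)
    (hJpo : ∀ x y : V, ⟪Jp x, Jp y⟫ = ⟪x, y⟫)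
    (hJmo : ∀ x y : V, ⟪Jm x, Jm y⟫ = ⟪x, y⟫)
    (hanti : Jp ∘ₗ Jm + Jm ∘ₗ Jp = (-(2 * p)) • LinearMap.id)
    (hp : p ≠ 1)
    (ω : V → V → ℝ)
    (hω : ∀ x y : V, ω x y
      = ⟪Jp x, y⟫ - (1 / (2 * (1 - p))) * ⟪(Jp ∘ₗ Jm - Jm ∘ₗ Jp) (Jp x), y⟫) :
    (∀ x y : V, ω x y = -ω y x) ∧
    (∀ x y : V, ω ((Jp - Jm) x) y = -2 * ⟪x, y⟫) ∧
    (FiniteDimensional ℝ V → ∀ x : V, (∀ y : V, ω x y = 0) → x = 0) := by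
  have h1p : (1 : ℝ) - p ≠ 0 := sub_ne_zero.mpr (Ne.symm hp)
  have hJp2' : ∀ x : V, Jp (Jp x) = -x := by
    intro x
    have := LinearMap.ext_iff.mp hJp2 x
    simpa using this
  have hJm2' : ∀ x : V, Jm (Jm x) = -x := by
    intro x
    have := LinearMap.ext_iff.mp hJm2 x
    simpa using this
  have ha' : ∀ x : V, Jp (Jm x) + Jm (Jp x) = (-(2 * p)) • x := by
    intro x
    have := LinearMap.ext_iff.mp hanti x
    simpa using this
  -- the commutator applied to Jp x
  have hK : ∀ x : V, (Jp ∘ₗ Jm - Jm ∘ₗ Jp) (Jp x)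
      = (2 : ℝ) • Jm x - (2 * p) • Jp x := by
    intro x
    have h1 := ha' (Jp x)
    have h2 : Jm (Jp (Jp x)) = -Jm x := by rw [hJp2' x, map_neg]
    simp only [LinearMap.sub_apply, LinearMap.comp_apply]
    rw [h2] at h1 ⊢
    linear_combination (norm := module) h1
  -- simplified formula for ω
  have hω' : ∀ x y : V, ω x y = (1 / (1 - p)) * ⟪(Jp - Jm) x, y⟫ := by
    intro x y
    rw [hω, hK]
    simp only [LinearMap.sub_apply, inner_sub_left, inner_smul_left,
      RCLike.star_def, starRingEnd_apply, star_trivial]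
    field_simp
    ring
  -- skew-adjointness
  have hskp : ∀ x y : V, ⟪Jp x, y⟫ = -⟪x, Jp y⟫ := by
    intro x y
    have := hJpo x (Jp y)
    rw [hJp2' y, inner_neg_right] at this
    linarith
  have hskm : ∀ x y : V, ⟪Jm x, y⟫ = -⟪x, Jm y⟫ := by
    intro x y
    have := hJmo x (Jm y)
    rw [hJm2' y, inner_neg_right] at this
    linarith
  have hsk : ∀ x y : V, ⟪(Jp - Jm) x, y⟫ = -⟪(Jp - Jm) y, x⟫ := by
    intro x y
    simp only [LinearMap.sub_apply, inner_sub_left]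
    rw [hskp x y, hskm x y, real_inner_comm x (Jp y), real_inner_comm x (Jm y)]
    ring
  -- (Jp - Jm)^2 = -2(1-p)
  have key : ∀ x : V, (Jp - Jm) ((Jp - Jm) x) = (-(2 * (1 - p))) • x := by
    intro x
    simp only [LinearMap.sub_apply, map_sub]
    rw [hJp2' x, hJm2' x]
    linear_combination (norm := module) - ha' x
  refine ⟨?_, ?_, ?_⟩
  · intro x y
    rw [hω', hω', hsk]
    ring
  · intro x y
    rw [hω', key, inner_smul_left]
    simp only [RCLike.star_def, starRingEnd_apply, star_trivial]
    field_simp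
  · intro _ x hx
    have hz : ∀ y : V, ⟪(Jp - Jm) x, y⟫ = 0 := by
      intro y
      have := hx y
      rw [hω'] at this
      have h0 : (1 : ℝ) / (1 - p) ≠ 0 := one_div_ne_zero h1p
      exact (mul_eq_zero.mp this).resolve_left h0
    have hzz : (Jp - Jm) x = 0 := by
      have := hz ((Jp - Jm) x)
      exact inner_self_eq_zero.mp (by rwa [real_inner_comm] at this)
    have := key x
    rw [hzz, map_zero] at this
    have hc : (-(2 * (1 - p)) : ℝ) ≠ 0 := by
      simp [h1p]
    rcases smul_eq_zero.mp this.symm with h | h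
    · exact absurd h hc
    · exact h
end
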